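/- arXiv:1804.08068 — 2 statements merged into one kernel-verified Lean document; each statement's English description precedes it below -/
import Mathlib

section
/- Let U be a subset of ℕ such that the natural density d(U) exists and is positive. Then U is fractionally dense in ℝ_{>0}, i.e. the quotient set R(U) = {u/u' : u, u' ∈ U} is dense in the positive reals. -/
/-!
If `U` has positive density `γ`, its counting function `A` satisfies `A(⌊r t⌋) ∼ γ r t` and
`A(⌊t⌋) ∼ γ t`, so for every `r > 1` and all large `t` the interval `(t, r t]` meets `U`.
Given `0 < x < y`, choose `v ∈ U` so large that this applies to `t = x v` with `r = y / x`:
some `u ∈ U` lies in `(x v, y v]`, that is, `x < u / v ≤ y`.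
-/

open Filter Topology

lemma exists_mem_Ioc_of_ncard_lt {U : Set ℕ} {m n : ℕ}
    (h : {u ∈ U | u ≤ m}.ncard < {u ∈ U | u ≤ n}.ncard) : ∃ u ∈ U, m < u ∧ u ≤ n := by
  by_contra! hgap
  refine h.not_ge (Set.ncard_le_ncard (fun u ⟨hu, hun⟩ => ⟨hu, ?_⟩) ?_)
  · exact not_lt.1 fun hmu => (hgap u hu hmu).not_ge hun
  · exact (Set.finite_Iic m).subset fun u hu => hu.2

lemma tendsto_apply_floor_mul_div {f : ℕ → ℝ} {γ c : ℝ}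
    (hf : Tendsto (fun n : ℕ => f n / n) atTop (𝓝 γ)) (hc : 0 < c) :
    Tendsto (fun t : ℝ => f ⌊c * t⌋₊ / t) atTop (𝓝 (γ * c)) := by
  have hfloor : Tendsto (fun t : ℝ => ⌊c * t⌋₊) atTop atTop :=
    tendsto_nat_floor_atTop.comp (tendsto_id.const_mul_atTop hc)
  refine ((hf.comp hfloor).mul (tendsto_nat_floor_mul_div_atTop hc.le)).congr' ?_
  filter_upwards [hfloor.eventually_gt_atTop 0] with t ht
  have : (⌊c * t⌋₊ : ℝ) ≠ 0 := by exact_mod_cast ht.ne'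
  simp only [Function.comp_apply]
  field_simp

section PositiveDensity

variable {U : Set ℕ} {γ : ℝ}

lemma eventually_exists_mem_Ioc_mul (hγ : 0 < γ)
    (hU : Tendsto (fun n : ℕ => ({u ∈ U | u ≤ n}.ncard : ℝ) / n) atTop (𝓝 γ))
    {r : ℝ} (hr : 1 < r) :
    ∀ᶠ t : ℝ in atTop, ∃ u ∈ U, t < u ∧ (u : ℝ) ≤ r * t := by
  have hlower := tendsto_apply_floor_mul_div hU one_pos
  have hupper := tendsto_apply_floor_mul_div hU (one_pos.trans hr)
  simp only [one_mul, mul_one] at hlower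
  filter_upwards [hlower.eventually_lt hupper (lt_mul_of_one_lt_right hγ hr),
    eventually_gt_atTop 0] with t hcount ht
  obtain ⟨u, hu, hfloor_lt, hle_floor⟩ := exists_mem_Ioc_of_ncard_lt
    (by exact_mod_cast (div_lt_div_iff_of_pos_right ht).1 hcount)
  refine ⟨u, hu, ?_, ?_⟩
  · calc t < ⌊t⌋₊ + 1 := Nat.lt_floor_add_one t
      _ ≤ u := by exact_mod_cast hfloor_lt
  · calc (u : ℝ) ≤ ⌊r * t⌋₊ := by exact_mod_cast hle_floor
      _ ≤ r * t := Nat.floor_le (by positivity)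

lemma exists_div_mem_Ioc (hγ : 0 < γ)
    (hU : Tendsto (fun n : ℕ => ({u ∈ U | u ≤ n}.ncard : ℝ) / n) atTop (𝓝 γ))
    {x y : ℝ} (hx : 0 < x) (hxy : x < y) :
    ∃ u ∈ U, ∃ v ∈ U, x < (u : ℝ) / v ∧ (u : ℝ) / v ≤ y := by
  have hgaps := eventually_exists_mem_Ioc_mul hγ hU (r := y / x) ((one_lt_div hx).2 hxy)
  have hfrequent : ∃ᶠ v : ℕ in atTop, v ∈ U := frequently_atTop.2 fun a => by
    obtain ⟨t, ⟨u, hu, htu, -⟩, hat⟩ := (hgaps.and (eventually_ge_atTop (a : ℝ))).exists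
    exact ⟨u, by exact_mod_cast hat.trans htu.le, hu⟩
  have hscaled := (eventually_gt_atTop 0).and
    ((tendsto_natCast_atTop_atTop.const_mul_atTop hx).eventually hgaps)
  obtain ⟨v, hv, hv0, u, hu, hlt, hle⟩ := (hfrequent.and_eventually hscaled).exists
  have hv0' : (0 : ℝ) < v := by exact_mod_cast hv0
  refine ⟨u, hu, v, hv, (lt_div_iff₀ hv0').2 hlt, (div_le_iff₀ hv0').2 ?_⟩
  rwa [← mul_assoc, div_mul_cancel₀ y hx.ne'] at hle

end PositiveDensity

/-- Corollary: if `U ⊆ ℕ` has positive natural density, then `U` is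
fractionally dense in the positive reals. -/
theorem stmt_4 (U : Set ℕ) (γ : ℝ) (hγ : 0 < γ)
    (hU : Filter.Tendsto (fun n : ℕ => ({u ∈ U | u ≤ n}.ncard : ℝ) / n)
      Filter.atTop (nhds γ)) :
    Set.Ioi (0 : ℝ) ⊆
      closure {x : ℝ | ∃ u ∈ U, ∃ v ∈ U, x = (u : ℝ) / (v : ℝ)} := by
  intro x hx
  refine Metric.mem_closure_iff.2 fun ε hε => ?_
  obtain ⟨u, hu, v, hv, hlt, hle⟩ :=
    exists_div_mem_Ioc hγ hU hx (lt_add_of_pos_right x (half_pos hε))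
  refine ⟨u / v, ⟨u, hu, v, hv, rfl⟩, ?_⟩
  rw [Real.dist_eq, abs_sub_lt_iff]
  constructor <;> linarith
end

section
/- Let K be a number field that is not contained in ℝ (i.e. K admits a complex, non-real embedding into ℂ), with ring of integers O_K, and let 𝔞 be a nonempty subset of O_K. Then there exist pairwise disjoint subsets A, B and C of 𝔞 with 𝔞 = A ∪ B ∪ C such that none of A, B, C is fractionally dense in ℂ (with respect to a fixed complex non-real embedding of K into ℂ). -/
/-!
Split the set according to which of the three arcs `(-π, -π/3)`, `[-π/3, π/3)`, `[π/3, π]` of the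
unit circle contains the argument of its image. Two points of the same piece have arguments at
most `2π/3` apart, so all quotients within a piece lie in the closed sector `|arg z| ≤ 2π/3`,
which misses a neighbourhood of `-1`.
-/

open Complex Real Set

def quotientSet {α : Type*} (g : α → ℂ) (A : Set α) : Set ℂ :=
  {z | ∃ x ∈ A, ∃ y ∈ A, g y ≠ 0 ∧ z = g x / g y}

lemma neg_half_le_cos_of_abs_le {θ : ℝ} (hθ : |θ| ≤ 2 * π / 3) : -(1 / 2) ≤ Real.cos θ := by
  have hcos : Real.cos (2 * π / 3) = -(1 / 2) := by
    rw [show 2 * π / 3 = π - π / 3 by ring, Real.cos_pi_sub, Real.cos_pi_div_three]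
  rw [← hcos, ← Real.cos_abs θ]
  exact Real.cos_le_cos_of_nonneg_of_le_pi (abs_nonneg θ) (by linarith [Real.pi_pos]) hθ

lemma neg_half_norm_le_re_div {x y : ℂ} (h : |arg x - arg y| ≤ 2 * π / 3) :
    -(‖x / y‖ / 2) ≤ (x / y).re := by
  rcases eq_or_ne x 0 with rfl | hx
  · simp
  rcases eq_or_ne y 0 with rfl | hy
  · simp
  have hcos : Real.cos (arg (x / y)) = Real.cos (arg x - arg y) := by
    rw [← Real.Angle.cos_coe, arg_div_coe_angle hx hy, ← Real.Angle.coe_sub, Real.Angle.cos_coe]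
  rw [← norm_mul_cos_arg (x / y), hcos]
  nlinarith [neg_half_le_cos_of_abs_le h, norm_nonneg (x / y)]

lemma not_dense_of_subset_neg_half_norm_le_re {S : Set ℂ} (hS : S ⊆ {z | -(‖z‖ / 2) ≤ z.re}) :
    ¬ Dense S := by
  intro hdense
  have hclosed : IsClosed {z : ℂ | -(‖z‖ / 2) ≤ z.re} := isClosed_le (by fun_prop) (by fun_prop)
  have hneg_one : (-1 : ℂ) ∈ {z : ℂ | -(‖z‖ / 2) ≤ z.re} := by
    rw [← hclosed.closure_eq, (hdense.mono hS).closure_eq]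
    exact mem_univ _
  norm_num at hneg_one

lemma not_dense_quotientSet {α : Type*} {g : α → ℂ} {A : Set α}
    (hA : ∀ x ∈ A, ∀ y ∈ A, |arg (g x) - arg (g y)| ≤ 2 * π / 3) :
    ¬ Dense (quotientSet g A) :=
  not_dense_of_subset_neg_half_norm_le_re fun _ ⟨x, hx, y, hy, _, hz⟩ =>
    hz ▸ neg_half_norm_le_re_div (hA x hx y hy)

theorem exists_three_partition_not_dense_quotientSet {α : Type*} (g : α → ℂ) (s : Set α) :
    ∃ A B C : Set α, A ∪ B ∪ C = s ∧ Disjoint A B ∧ Disjoint B C ∧ Disjoint A C ∧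
      ¬ Dense (quotientSet g A) ∧ ¬ Dense (quotientSet g B) ∧ ¬ Dense (quotientSet g C) := by
  have harg (x : α) := And.intro (neg_pi_lt_arg (g x)) (arg_le_pi (g x))
  refine ⟨{x ∈ s | arg (g x) < -(π / 3)}, {x ∈ s | -(π / 3) ≤ arg (g x) ∧ arg (g x) < π / 3},
    {x ∈ s | π / 3 ≤ arg (g x)}, ?_, ?_, ?_, ?_, ?_, ?_, ?_⟩
  · ext x
    simp only [mem_union, mem_ofPred_eq]
    constructor
    · rintro ((⟨hx, -⟩ | ⟨hx, -⟩) | ⟨hx, -⟩) <;> exact hx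
    · intro hx
      by_cases h₁ : arg (g x) < -(π / 3)
      · exact .inl (.inl ⟨hx, h₁⟩)
      by_cases h₂ : arg (g x) < π / 3
      · exact .inl (.inr ⟨hx, not_lt.mp h₁, h₂⟩)
      · exact .inr ⟨hx, not_lt.mp h₂⟩
  · exact disjoint_left.mpr fun x ⟨_, h₁⟩ ⟨_, h₂, _⟩ => by linarith
  · exact disjoint_left.mpr fun x ⟨_, _, h₁⟩ ⟨_, h₂⟩ => by linarith
  · exact disjoint_left.mpr fun x ⟨_, h₁⟩ ⟨_, h₂⟩ => by linarith [Real.pi_pos]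
  all_goals
    refine not_dense_quotientSet fun x hx y hy => abs_le.mpr ?_
    obtain ⟨-, hx⟩ := hx
    obtain ⟨-, hy⟩ := hy
    constructor <;> linarith [harg x, harg y]

theorem stmt_13_general (K : Type*) [Field K] (σ : K →+* ℂ)
    (𝔞 : Set (NumberField.RingOfIntegers K)) :
    ∃ A B C : Set (NumberField.RingOfIntegers K),
      A ∪ B ∪ C = 𝔞 ∧ Disjoint A B ∧ Disjoint B C ∧ Disjoint A C ∧
      ¬ Dense {z : ℂ | ∃ x ∈ A, ∃ y ∈ A,
          σ (algebraMap (NumberField.RingOfIntegers K) K y) ≠ 0 ∧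
          z = σ (algebraMap (NumberField.RingOfIntegers K) K x) /
              σ (algebraMap (NumberField.RingOfIntegers K) K y)} ∧
      ¬ Dense {z : ℂ | ∃ x ∈ B, ∃ y ∈ B,
          σ (algebraMap (NumberField.RingOfIntegers K) K y) ≠ 0 ∧
          z = σ (algebraMap (NumberField.RingOfIntegers K) K x) /
              σ (algebraMap (NumberField.RingOfIntegers K) K y)} ∧
      ¬ Dense {z : ℂ | ∃ x ∈ C, ∃ y ∈ C,
          σ (algebraMap (NumberField.RingOfIntegers K) K y) ≠ 0 ∧
          z = σ (algebraMap (NumberField.RingOfIntegers K) K x) /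
              σ (algebraMap (NumberField.RingOfIntegers K) K y)} :=
  exists_three_partition_not_dense_quotientSet (fun x => σ (algebraMap _ K x)) 𝔞

/-- Theorem 5: for a number field `K` with a non-real complex embedding `σ` and
a nonempty subset `𝔞` of `𝓞 K`, there is a three-partition `𝔞 = A ∪ B ∪ C`
into pairwise disjoint subsets none of which is fractionally dense in `ℂ`. -/
theorem stmt_13 (K : Type*) [Field K] [NumberField K] (σ : K →+* ℂ)
    (hσ : ∃ x : K, (σ x).im ≠ 0)
    (𝔞 : Set (NumberField.RingOfIntegers K)) (h𝔞 : 𝔞.Nonempty) :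
    ∃ A B C : Set (NumberField.RingOfIntegers K),
      A ∪ B ∪ C = 𝔞 ∧ Disjoint A B ∧ Disjoint B C ∧ Disjoint A C ∧
      ¬ Dense {z : ℂ | ∃ x ∈ A, ∃ y ∈ A,
          σ (algebraMap (NumberField.RingOfIntegers K) K y) ≠ 0 ∧
          z = σ (algebraMap (NumberField.RingOfIntegers K) K x) /
              σ (algebraMap (NumberField.RingOfIntegers K) K y)} ∧
      ¬ Dense {z : ℂ | ∃ x ∈ B, ∃ y ∈ B,
          σ (algebraMap (NumberField.RingOfIntegers K) K y) ≠ 0 ∧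
          z = σ (algebraMap (NumberField.RingOfIntegers K) K x) /
              σ (algebraMap (NumberField.RingOfIntegers K) K y)} ∧
      ¬ Dense {z : ℂ | ∃ x ∈ C, ∃ y ∈ C,
          σ (algebraMap (NumberField.RingOfIntegers K) K y) ≠ 0 ∧
          z = σ (algebraMap (NumberField.RingOfIntegers K) K x) /
              σ (algebraMap (NumberField.RingOfIntegers K) K y)} :=
  stmt_13_general K σ 𝔞
end
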